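/- arXiv:nlin/0107063 — 2 statements merged into one kernel-verified Lean document; each statement's English description precedes it below -/
import Mathlib

section
/- If smooth nonvanishing functions u_m, w_m of (x₁, x₂) (for m ∈ ℤ) satisfy the first RTCh flow ∂ ln u_m/∂x₁ = w_m(κu_m + u_{m−1}), −∂ ln w_m/∂x₁ = u_m(κw_m + w_{m+1}) and the second flow −∂ ln u_m/∂x₂ = u_m w_m w_{m+1}(κu_m + u_{m−1}) + u_{m−1}w_{m−1}w_m(κu_{m−1} + u_{m−2}) + w_m²(κu_m + u_{m−1})², ∂ ln w_m/∂x₂ = u_{m−1}u_m w_m(κw_m + w_{m+1}) + u_m u_{m+1} w_{m+1}(κw_{m+1} + w_{m+2}) + u_m²(κw_m + w_{m+1})², then they satisfy the compatibility equations ∂u_m/∂x₂ = −∂²u_m/∂x₁² − 2u_m w_{m+1} ∂u_m/∂x₁ and ∂w_{m+1}/∂x₂ = ∂²w_{m+1}/∂x₁² − 2u_m w_{m+1} ∂w_{m+1}/∂x₁. -/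
open scoped Topology

/-- Partial derivative in the first variable of a two-variable function. -/
noncomputable def pd1 (g : ℝ → ℝ → ℂ) (x y : ℝ) : ℂ := deriv (fun s => g s y) x

/-- Partial derivative in the second variable of a two-variable function. -/
noncomputable def pd2 (g : ℝ → ℝ → ℂ) (x y : ℝ) : ℂ := deriv (fun s => g x s) y

/-- smooth nonvanishing `u_m, w_m` satisfying the first and second RTCh
flows (RTCh-1), (RTCh-2) satisfy the compatibility equations (RTCh-1-2):
`∂u_m/∂x₂ = −∂²u_m/∂x₁² − 2 u_m w_{m+1} ∂u_m/∂x₁` and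
`∂w_{m+1}/∂x₂ = ∂²w_{m+1}/∂x₁² − 2 u_m w_{m+1} ∂w_{m+1}/∂x₁`. -/
theorem rtch_flows_compatibility
    (κ : ℂ) (u w : ℤ → ℝ → ℝ → ℂ)
    (hu_smooth : ∀ m, ContDiff ℝ (⊤ : ℕ∞) (fun p : ℝ × ℝ => u m p.1 p.2))
    (hw_smooth : ∀ m, ContDiff ℝ (⊤ : ℕ∞) (fun p : ℝ × ℝ => w m p.1 p.2))
    (hu0 : ∀ m x y, u m x y ≠ 0) (hw0 : ∀ m x y, w m x y ≠ 0)
    -- first flow (RTCh-1), in the variable x₁: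
    (flow1u : ∀ m x y, pd1 (u m) x y / u m x y
      = w m x y * (κ * u m x y + u (m - 1) x y))
    (flow1w : ∀ m x y, -(pd1 (w m) x y) / w m x y
      = u m x y * (κ * w m x y + w (m + 1) x y))
    -- second flow (RTCh-2), in the variable x₂:
    (flow2u : ∀ m x y, -(pd2 (u m) x y) / u m x y
      = u m x y * w m x y * w (m + 1) x y * (κ * u m x y + u (m - 1) x y)
        + u (m - 1) x y * w (m - 1) x y * w m x y * (κ * u (m - 1) x y + u (m - 2) x y)
        + (w m x y) ^ 2 * (κ * u m x y + u (m - 1) x y) ^ 2)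
    (flow2w : ∀ m x y, pd2 (w m) x y / w m x y
      = u (m - 1) x y * u m x y * w m x y * (κ * w m x y + w (m + 1) x y)
        + u m x y * u (m + 1) x y * w (m + 1) x y * (κ * w (m + 1) x y + w (m + 2) x y)
        + (u m x y) ^ 2 * (κ * w m x y + w (m + 1) x y) ^ 2) :
    ∀ m x y,
      pd2 (u m) x y
          = -(pd1 (fun a b => pd1 (u m) a b) x y)
            - 2 * u m x y * w (m + 1) x y * pd1 (u m) x y ∧
      pd2 (w (m + 1)) x y
          = pd1 (fun a b => pd1 (w (m + 1)) a b) x y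
            - 2 * u m x y * w (m + 1) x y * pd1 (w (m + 1)) x y := by

  -- derivative existence in the first variable
  have hd1 : ∀ (g : ℝ → ℝ → ℂ), ContDiff ℝ (⊤ : ℕ∞) (fun p : ℝ × ℝ => g p.1 p.2) →
      ∀ x y : ℝ, HasDerivAt (fun s => g s y) (pd1 g x y) x := by
    intro g hg x y
    have hdg : Differentiable ℝ (fun s => g s y) :=
      (hg.differentiable (by simp)).comp (differentiable_id.prodMk (differentiable_const y))
    simpa [pd1] using (hdg x).hasDerivAt
  -- pointwise formulas for the first-flow derivatives
  have hDu : ∀ (m : ℤ) x y, pd1 (u m) x y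
      = w m x y * (κ * u m x y + u (m - 1) x y) * u m x y := by
    intro m x y
    exact (div_eq_iff (hu0 m x y)).mp (flow1u m x y)
  have hDw : ∀ (m : ℤ) x y, pd1 (w m) x y
      = -(u m x y * (κ * w m x y + w (m + 1) x y) * w m x y) := by
    intro m x y
    have h := (div_eq_iff (hw0 m x y)).mp (flow1w m x y)
    linear_combination -h
  intro m x y
  constructor
  · -- u equation
    have key : (fun s => pd1 (u m) s y)
        = (fun s => w m s y * (κ * u m s y + u (m - 1) s y) * u m s y) :=
      funext fun s => hDu m s y
    have Hu := hd1 (u m) (hu_smooth m) x y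
    have Hu1 := hd1 (u (m - 1)) (hu_smooth (m - 1)) x y
    have Hw := hd1 (w m) (hw_smooth m) x y
    have Hprod : HasDerivAt
        (fun s => w m s y * (κ * u m s y + u (m - 1) s y) * u m s y)
        ((pd1 (w m) x y * (κ * u m x y + u (m - 1) x y)
            + w m x y * (κ * pd1 (u m) x y + pd1 (u (m - 1)) x y)) * u m x y
          + w m x y * (κ * u m x y + u (m - 1) x y) * pd1 (u m) x y) x :=
      (Hw.mul ((Hu.const_mul κ).add Hu1)).mul Hu
    have h2nd : pd1 (fun a b => pd1 (u m) a b) x y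
        = (pd1 (w m) x y * (κ * u m x y + u (m - 1) x y)
            + w m x y * (κ * pd1 (u m) x y + pd1 (u (m - 1)) x y)) * u m x y
          + w m x y * (κ * u m x y + u (m - 1) x y) * pd1 (u m) x y := by
      show deriv (fun s => pd1 (u m) s y) x = _
      rw [key]
      exact Hprod.deriv
    have h2 : pd2 (u m) x y
        = -((u m x y * w m x y * w (m + 1) x y * (κ * u m x y + u (m - 1) x y)
        + u (m - 1) x y * w (m - 1) x y * w m x y * (κ * u (m - 1) x y + u (m - 2) x y)
        + (w m x y) ^ 2 * (κ * u m x y + u (m - 1) x y) ^ 2) * u m x y) := by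
      have h := (div_eq_iff (hu0 m x y)).mp (flow2u m x y)
      linear_combination -h
    rw [h2, h2nd, hDu m x y, hDu (m - 1) x y, hDw m x y]
    ring
  · -- w equation
    have key : (fun s => pd1 (w (m + 1)) s y)
        = (fun s => -(u (m + 1) s y * (κ * w (m + 1) s y + w (m + 1 + 1) s y) * w (m + 1) s y)) :=
      funext fun s => hDw (m + 1) s y
    have Hu1 := hd1 (u (m + 1)) (hu_smooth (m + 1)) x y
    have Hw1 := hd1 (w (m + 1)) (hw_smooth (m + 1)) x y
    have Hw2 := hd1 (w (m + 1 + 1)) (hw_smooth (m + 1 + 1)) x y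
    have Hprod : HasDerivAt
        (fun s => -(u (m + 1) s y * (κ * w (m + 1) s y + w (m + 1 + 1) s y) * w (m + 1) s y))
        (-((pd1 (u (m + 1)) x y * (κ * w (m + 1) x y + w (m + 1 + 1) x y)
            + u (m + 1) x y * (κ * pd1 (w (m + 1)) x y + pd1 (w (m + 1 + 1)) x y)) * w (m + 1) x y
          + u (m + 1) x y * (κ * w (m + 1) x y + w (m + 1 + 1) x y) * pd1 (w (m + 1)) x y)) x :=
      ((Hu1.mul ((Hw1.const_mul κ).add Hw2)).mul Hw1).neg
    have h2nd : pd1 (fun a b => pd1 (w (m + 1)) a b) x y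
        = -((pd1 (u (m + 1)) x y * (κ * w (m + 1) x y + w (m + 1 + 1) x y)
            + u (m + 1) x y * (κ * pd1 (w (m + 1)) x y + pd1 (w (m + 1 + 1)) x y)) * w (m + 1) x y
          + u (m + 1) x y * (κ * w (m + 1) x y + w (m + 1 + 1) x y) * pd1 (w (m + 1)) x y) := by
      show deriv (fun s => pd1 (w (m + 1)) s y) x = _
      rw [key]
      exact Hprod.deriv
    have h2 : pd2 (w (m + 1)) x y
        = (u (m + 1 - 1) x y * u (m + 1) x y * w (m + 1) x y * (κ * w (m + 1) x y + w (m + 1 + 1) x y)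
        + u (m + 1) x y * u (m + 1 + 1) x y * w (m + 1 + 1) x y * (κ * w (m + 1 + 1) x y + w (m + 1 + 2) x y)
        + (u (m + 1) x y) ^ 2 * (κ * w (m + 1) x y + w (m + 1 + 1) x y) ^ 2) * w (m + 1) x y :=
      (div_eq_iff (hw0 (m + 1) x y)).mp (flow2w (m + 1) x y)
    have e1 : m + 1 - 1 = m := by ring
    rw [h2, h2nd, hDu (m + 1) x y, hDw (m + 1) x y, hDw (m + 1 + 1) x y, e1]
    have e3 : m + 1 + 1 + 1 = m + 1 + 2 := by ring
    rw [e3]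
    ring
end

section
/- Suppose nonvanishing differentiable functions u_m(x₁), w_m(x₁) (m ∈ ℤ) satisfy ∂ ln u_m/∂x₁ = w_m(κu_m + u_{m−1}) − (κ+1) and −∂ ln w_m/∂x₁ = u_m(κw_m + w_{m+1}) − (κ+1). Set u_m = exp(q_m(√(1+κ)·x₁)), so that w_m = √(1+κ)(√(1+κ)+q'_m)/(κe^{q_m}+e^{q_{m−1}}). Then, provided the denominators are nonzero, q_m(t) satisfies the relativistic Toda chain equation q''_m = (√(1+κ)+q'_{m−1})(√(1+κ)+q'_m)/(1 + κe^{q_m − q_{m−1}}) − (√(1+κ)+q'_m)(√(1+κ)+q'_{m+1})/(1 + κe^{q_{m+1} − q_m}). -/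
lemma key_algebra (r κ em1 em em' wm wm1 w'm Q0 Q1 Q2 Q'' : ℂ)
    (hr0 : r ≠ 0)
    (hem1 : em1 ≠ 0) (hem : em ≠ 0)
    (hd1 : em1 + κ * em ≠ 0) (hd2 : em + κ * em' ≠ 0)
    (h1 : wm * (κ * em + em1) = r * Q1 + r ^ 2)
    (h2 : wm1 * (κ * em' + em) = r * Q2 + r ^ 2)
    (h3 : w'm * (κ * em + em1) + wm * (κ * (em * (r * Q1)) + em1 * (r * Q0)) = r ^ 2 * Q'')
    (h4 : -w'm = wm * (em * (κ * wm + wm1) - r ^ 2)) :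
    Q'' = (r + Q0) * (r + Q1) / (1 + κ * (em / em1))
        - (r + Q1) * (r + Q2) / (1 + κ * (em' / em)) := by
  have hG : r ^ 2 * Q'' * ((κ * em + em1) * (κ * em' + em))
      = (r * Q0 + r ^ 2) * (r * Q1 + r ^ 2) * em1 * (κ * em' + em)
        - (r * Q1 + r ^ 2) * (r * Q2 + r ^ 2) * em * (κ * em + em1) := by
    linear_combination (-((κ*em+em1)*(κ*em'+em))) * h3
      + (-((κ*em+em1)^2*(κ*em'+em))) * h4
      + (-(κ*em*(κ*em'+em)*(wm*(κ*em+em1) + (r*Q1+r^2)))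
          + (κ*(em*(r*Q1)) + em1*(r*Q0))*(κ*em'+em)
          + r^2*(κ*em+em1)*(κ*em'+em)
          - em*(κ*em+em1)*wm1*(κ*em'+em)) * h1
      + (-(em*(κ*em+em1)*(r*Q1+r^2))) * h2
  have hG2 : Q'' * ((κ * em + em1) * (κ * em' + em))
      = (r + Q0) * (r + Q1) * em1 * (κ * em' + em)
        - (r + Q1) * (r + Q2) * em * (κ * em + em1) := by
    apply mul_left_cancel₀ (pow_ne_zero 2 hr0)
    linear_combination hG
  field_simp
  linear_combination hG2

/-- chain rule for `x ↦ f (r * x)` with `f : ℂ → ℂ`. -/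
lemma chain_r {f : ℂ → ℂ} (hf : Differentiable ℂ f) (r : ℂ) (x : ℝ) :
    HasDerivAt (fun y : ℝ => f (r * y)) (r * deriv f (r * x)) x := by
  have h1 : HasDerivAt (fun z : ℂ => f (r * z)) (deriv f (r * x) * (r * 1)) (x : ℂ) :=
    HasDerivAt.comp _ (hf (r * x)).hasDerivAt ((hasDerivAt_id (x : ℂ)).const_mul r)
  simpa [mul_comm] using h1.comp_ofReal


/-- if `u_m(x₁) = exp(q_m(√(1+κ)·x₁))` and some nonvanishing `w_m` make
`(u_m, w_m)` a solution of the modified first RTCh flow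
`∂ ln u_m/∂x₁ = w_m(κu_m + u_{m−1}) − (κ+1)`,
`−∂ ln w_m/∂x₁ = u_m(κw_m + w_{m+1}) − (κ+1)`,
then each `q_m` satisfies the relativistic Toda chain equation
`q''_m = (√(1+κ)+q'_{m−1})(√(1+κ)+q'_m)/(1 + κe^{q_m−q_{m−1}})
       − (√(1+κ)+q'_m)(√(1+κ)+q'_{m+1})/(1 + κe^{q_{m+1}−q_m})`
(at the points `t = √(1+κ)·x₁` where the flow lives).
Here `r` is a fixed square root of `1+κ`, and `q_m : ℂ → ℂ` is holomorphic with
holomorphic derivative so that `q''_m` makes sense. -/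
theorem relativistic_toda_chain_equation
    (κ r : ℂ) (hκ : 1 + κ ≠ 0) (hr : r ^ 2 = 1 + κ)
    (q : ℤ → ℂ → ℂ)
    (hq : ∀ m, Differentiable ℂ (q m))
    (hq' : ∀ m, Differentiable ℂ (deriv (q m)))
    (u : ℤ → ℝ → ℂ) (hu : ∀ m x, u m x = Complex.exp (q m (r * x)))
    (w : ℤ → ℝ → ℂ) (hwdiff : ∀ m, Differentiable ℝ (w m))
    (hw0 : ∀ m x, w m x ≠ 0)
    (flow_u : ∀ (m : ℤ) (x : ℝ), deriv (u m) x / u m x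
      = w m x * (κ * u m x + u (m - 1) x) - (κ + 1))
    (flow_w : ∀ (m : ℤ) (x : ℝ), -(deriv (w m) x) / w m x
      = u m x * (κ * w m x + w (m + 1) x) - (κ + 1))
    (hden : ∀ (m : ℤ) (x : ℝ),
      1 + κ * Complex.exp (q (m + 1) (r * x) - q m (r * x)) ≠ 0) :
    ∀ (m : ℤ) (x : ℝ),
      deriv (deriv (q m)) (r * x)
        = (r + deriv (q (m - 1)) (r * x)) * (r + deriv (q m) (r * x))
            / (1 + κ * Complex.exp (q m (r * x) - q (m - 1) (r * x)))
          - (r + deriv (q m) (r * x)) * (r + deriv (q (m + 1)) (r * x))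
            / (1 + κ * Complex.exp (q (m + 1) (r * x) - q m (r * x))) := by
  have hr0 : r ≠ 0 := fun h => hκ (by simpa [h] using hr.symm)
  -- derivative of u m
  have hu_deriv : ∀ (m : ℤ) (x : ℝ),
      HasDerivAt (u m) (Complex.exp (q m (r * x)) * (r * deriv (q m) (r * x))) x := by
    intro m x
    have : HasDerivAt (fun y : ℝ => Complex.exp (q m (r * y)))
        (Complex.exp (q m (r * x)) * (r * deriv (q m) (r * x))) x :=
      (chain_r (hq m) r x).cexp
    have hfe : u m = fun y : ℝ => Complex.exp (q m (r * y)) := funext fun y => hu m y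
    rw [hfe]; exact this
  -- the first flow equation, rearranged
  have hE1 : ∀ (m : ℤ) (x : ℝ),
      w m x * (κ * Complex.exp (q m (r * x)) + Complex.exp (q (m - 1) (r * x)))
        = r * deriv (q m) (r * x) + (κ + 1) := by
    intro m x
    have hne : Complex.exp (q m (r * x)) ≠ 0 := Complex.exp_ne_zero _
    have h := flow_u m x
    rw [(hu_deriv m x).deriv, hu m x, hu (m - 1) x,
      mul_div_cancel_left₀ _ hne] at h
    linear_combination -h
  intro m x
  -- notation
  set em1 := Complex.exp (q (m - 1) (r * x)) with hem1def
  set em := Complex.exp (q m (r * x)) with hemdef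
  set em' := Complex.exp (q (m + 1) (r * x)) with hem'def
  have hem1 : em1 ≠ 0 := Complex.exp_ne_zero _
  have hem : em ≠ 0 := Complex.exp_ne_zero _
  have hem' : em' ≠ 0 := Complex.exp_ne_zero _
  -- h1
  have h1 : w m x * (κ * em + em1) = r * deriv (q m) (r * x) + r ^ 2 := by
    have := hE1 m x; rw [hr]; linear_combination this
  -- h2
  have h2 : w (m + 1) x * (κ * em' + em) = r * deriv (q (m + 1)) (r * x) + r ^ 2 := by
    have := hE1 (m + 1) x
    rw [add_sub_cancel_right] at this
    rw [hr]; linear_combination this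
  -- h3 : differentiate the (rearranged) first flow equation
  have h3 : deriv (w m) x * (κ * em + em1)
      + w m x * (κ * (em * (r * deriv (q m) (r * x))) + em1 * (r * deriv (q (m - 1)) (r * x)))
      = r ^ 2 * deriv (deriv (q m)) (r * x) := by
    have hL : HasDerivAt (fun y : ℝ => w m y * (κ * u m y + u (m - 1) y))
        (deriv (w m) x * (κ * u m x + u (m - 1) x)
          + w m x * (κ * (Complex.exp (q m (r * x)) * (r * deriv (q m) (r * x)))
            + Complex.exp (q (m - 1) (r * x)) * (r * deriv (q (m - 1)) (r * x)))) x :=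
      ((hwdiff m x).hasDerivAt).mul (((hu_deriv m x).const_mul κ).add (hu_deriv (m - 1) x))
    have hR : HasDerivAt (fun y : ℝ => r * deriv (q m) (r * y) + (κ + 1))
        (r * (r * deriv (deriv (q m)) (r * x))) x :=
      ((chain_r (hq' m) r x).const_mul r).add_const _
    have hfe : (fun y : ℝ => w m y * (κ * u m y + u (m - 1) y))
        = fun y : ℝ => r * deriv (q m) (r * y) + (κ + 1) := by
      funext y; rw [hu m y, hu (m - 1) y]; exact hE1 m y
    have huni := (hfe ▸ hL).unique hR
    rw [hu m x, hu (m - 1) x] at huni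
    calc deriv (w m) x * (κ * em + em1)
          + w m x * (κ * (em * (r * deriv (q m) (r * x)))
            + em1 * (r * deriv (q (m - 1)) (r * x)))
        = r * (r * deriv (deriv (q m)) (r * x)) := huni
      _ = r ^ 2 * deriv (deriv (q m)) (r * x) := by ring
  -- h4 : the second flow equation multiplied by w m x
  have h4 : -(deriv (w m) x) = w m x * (em * (κ * w m x + w (m + 1) x) - r ^ 2) := by
    have h := flow_w m x
    rw [div_eq_iff (hw0 m x), hu m x] at h
    rw [hr]; linear_combination h
  -- nonvanishing denominators
  have hd1 : em1 + κ * em ≠ 0 := by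
    have h := hden (m - 1) x
    rw [sub_add_cancel, Complex.exp_sub] at h
    have : em1 + κ * em = em1 * (1 + κ * (em / em1)) := by field_simp
    rw [this]
    exact mul_ne_zero hem1 h
  have hd2 : em + κ * em' ≠ 0 := by
    have h := hden m x
    rw [Complex.exp_sub] at h
    have : em + κ * em' = em * (1 + κ * (em' / em)) := by field_simp
    rw [this]
    exact mul_ne_zero hem h
  rw [Complex.exp_sub, Complex.exp_sub]
  exact key_algebra r κ em1 em em' (w m x) (w (m + 1) x) (deriv (w m) x)
    (deriv (q (m - 1)) (r * x)) (deriv (q m) (r * x)) (deriv (q (m + 1)) (r * x))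
    (deriv (deriv (q m)) (r * x)) hr0 hem1 hem hd1 hd2 h1 h2 h3 h4
end
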